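/- Two-stage robust feasibility with a terminal constraint (Theorem 2 in the case N = 2). Let 0 < T₁ < T, let P₁ be a set of state sequences of length T₁ + 1 and P₂ a set of state sequences of length T − T₁ + 1. Define the terminal set 𝒯 = {y ∈ ℝ^n : ∃ inputs u'_{T₁}, …, u'_{T−1} ∈ U such that for all disturbances w'_{T₁}, …, w'_{T−1} ∈ W, the disturbed trajectory from y belongs to P₂}. Suppose for the initial state x₀ there exist inputs u₀, …, u_{T₁−1} ∈ U such that for every disturbance sequence w₀, …, w_{T₁−1} ∈ W, the disturbed trajectory (x₀, …, x_{T₁}) belongs to P₁ and x_{T₁} ∈ 𝒯. Then there exists a map g : ℝ^n → U^{T−T₁} such that for every disturbance sequence w₀, …, w_{T−1} ∈ W, the trajectory obtained by applying u₀, …, u_{T₁−1} on {0, …, T₁−1} and then the input block g(x_{T₁}) on {T₁, …, T−1} satisfies both (x₀, …, x_{T₁}) ∈ P₁ and (x_{T₁}, …, x_T) ∈ P₂. -/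
import Mathlib


/-- The state space `ℝ^n`. -/
abbrev Vec (n : ℕ) := EuclideanSpace ℝ (Fin n)
/-- Auxiliary: disturbed trajectory, `i` steps after the starting instant `k`. -/
def dtrajAux {n m : ℕ} (f : Vec n → Vec m → Vec n) (k : ℕ) (x : Vec n)
    (u : ℕ → Vec m) (w : ℕ → Vec n) : ℕ → Vec n
  | 0 => x
  | i + 1 => f (dtrajAux f k x u w i) (u (k + i)) + w (k + i)

/-- Disturbed trajectory: `dtraj f k x u w j` is the state at time `j ≥ k`, where the
state at time `k` is `x` and `x_{j+1} = f (x_j, u_j) + w_j`. -/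
def dtraj {n m : ℕ} (f : Vec n → Vec m → Vec n) (k : ℕ) (x : Vec n)
    (u : ℕ → Vec m) (w : ℕ → Vec n) (j : ℕ) : Vec n :=
  dtrajAux f k x u w (j - k)

/-- Two-stage robust feasibility with a terminal constraint (Theorem 2, case `N = 2`):
if from `x₀` there are inputs robustly realizing the stage-1 requirement `P₁` and
robustly steering `x_{T₁}` into the terminal set `𝒯` (the set of states from which the
stage-2 requirement `P₂` is robustly feasible), then there is a feedback block
`g : ℝ^n → U^{T-T₁}` such that the resulting two-stage closed-loop trajectory
satisfies both `P₁` and `P₂` for every disturbance sequence. -/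
theorem two_stage_robust_feasibility {n m : ℕ}
    (f : Vec n → Vec m → Vec n) (U : Set (Vec m)) (W : Set (Vec n))
    (T₁ T : ℕ) (hT₁ : 0 < T₁) (hT : T₁ < T)
    (P₁ : Set (Fin (T₁ + 1) → Vec n)) (P₂ : Set (Fin (T - T₁ + 1) → Vec n))
    (x0 : Vec n) (u : ℕ → Vec m) (huU : ∀ j, j < T₁ → u j ∈ U)
    (hfeas : ∀ w : ℕ → Vec n, (∀ j, j < T₁ → w j ∈ W) →
      (fun i : Fin (T₁ + 1) => dtraj f 0 x0 u w (i : ℕ)) ∈ P₁ ∧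
      dtraj f 0 x0 u w T₁ ∈
        {y : Vec n | ∃ u' : ℕ → Vec m,
          (∀ j, T₁ ≤ j → j < T → u' j ∈ U) ∧
          ∀ w' : ℕ → Vec n, (∀ j, T₁ ≤ j → j < T → w' j ∈ W) →
            (fun i : Fin (T - T₁ + 1) => dtraj f T₁ y u' w' (T₁ + (i : ℕ))) ∈ P₂}) :
    ∃ g : Vec n → ℕ → Vec m,
      (∀ y j, T₁ ≤ j → j < T → g y j ∈ U) ∧
      ∀ w : ℕ → Vec n, (∀ j, j < T → w j ∈ W) →
        (fun i : Fin (T₁ + 1) => dtraj f 0 x0 u w (i : ℕ)) ∈ P₁ ∧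
        (fun i : Fin (T - T₁ + 1) =>
          dtraj f T₁ (dtraj f 0 x0 u w T₁) (g (dtraj f 0 x0 u w T₁)) w
            (T₁ + (i : ℕ))) ∈ P₂ := by
  classical
  set Q : Vec n → Prop := fun y => ∃ u' : ℕ → Vec m,
      (∀ j, T₁ ≤ j → j < T → u' j ∈ U) ∧
      ∀ w' : ℕ → Vec n, (∀ j, T₁ ≤ j → j < T → w' j ∈ W) →
        (fun i : Fin (T - T₁ + 1) => dtraj f T₁ y u' w' (T₁ + (i : ℕ))) ∈ P₂ with hQ
  refine ⟨fun y => if h : Q y then h.choose else fun _ => u 0, ?_, ?_⟩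
  · intro y j hj1 hj2
    by_cases h : Q y
    · simp only [dif_pos h]
      exact h.choose_spec.1 j hj1 hj2
    · simp only [dif_neg h]
      exact huU 0 hT₁
  · intro w hw
    obtain ⟨h1, h2⟩ := hfeas w (fun j hj => hw j (hj.trans hT))
    refine ⟨h1, ?_⟩
    have hQy : Q (dtraj f 0 x0 u w T₁) := h2
    simp only [dif_pos hQy]
    exact hQy.choose_spec.2 w (fun j _ hj => hw j hj)
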